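/- Fix i ∈ {1,…,5}. Let A and B be the involutions on ℂ^5 given by A(x1,…,x5) = (−x1,−x2,−x3,−x4,x5) and B(x1,…,x5) = (x1,…,x4,−x5), and for a rational function f let f^{o,o}(x) = (f(x) − f(Ax) − f(Bx) + f(ABx))/4 be its component odd under both A and B. Then for the Chinta–Gunnells action of the simple reflection σi of D4^(1), one has (f|σi)^{o,o}(x;u) = −xi · f^{o,o}(σi x; u). In particular, if f^{o,o} = 0, then (f|σi)^{o,o} = 0. -/

import Mathlib

/-- Adjacency in the Dynkin diagram of `D4^(1)`: nodes `0,1,2,3` (the papers'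
`1,…,4`) are each attached to the central node `4` (the papers' `5`). -/
def adj (i j : Fin 5) : Prop := (i = 4 ∧ j ≠ 4) ∨ (i ≠ 4 ∧ j = 4)

instance (i j : Fin 5) : Decidable (adj i j) := by unfold adj; infer_instance

/-- Action of the simple reflection `σi` on the variables:
`(σi x)_i = 1/xᵢ`, `(σi x)_j = xᵢ·x_j` at Dynkin neighbors `j` of `i`, and
other coordinates are unchanged. -/
noncomputable def sigAct {K : Type*} [Field K] (i : Fin 5) (x : Fin 5 → K) : Fin 5 → K :=
  fun j => if j = i then (x i)⁻¹ else if adj i j then x i * x j else x j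

/-- The sign involution `εi`: `(εi x)_j = −x_j` exactly at Dynkin neighbors `j` of `i`. -/
def epsAct {K : Type*} [Field K] (i : Fin 5) (x : Fin 5 → K) : Fin 5 → K :=
  fun j => if adj i j then -x j else x j

/-- The building block `J(x,u,ε) = (x/2)·((u−x)/(1−ux) − (−1)^ε)`. -/
noncomputable def J {K : Type*} [Field K] (x u : K) (ε : ℕ) : K :=
  x / 2 * ((u - x) / (1 - u * x) - (-1) ^ ε)

/-- The Chinta–Gunnells action of the simple reflection `σi`:
`f|σi(x;u) = f(σi x;u)·J(xᵢ,u,0) + f(εi σi x;u)·J(xᵢ,u,1)`. -/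
noncomputable def cg {K : Type*} [Field K] (i : Fin 5) (f : (Fin 5 → K) → K → K) :
    (Fin 5 → K) → K → K :=
  fun x u => f (sigAct i x) u * J (x i) u 0 + f (epsAct i (sigAct i x)) u * J (x i) u 1

/-- The involution `A(x1,…,x5) = (−x1,−x2,−x3,−x4,x5)`. -/
def invA (x : Fin 5 → ℂ) : Fin 5 → ℂ := fun j => if j = 4 then x j else -x j

/-- The involution `B(x1,…,x5) = (x1,…,x4,−x5)`. -/
def invB (x : Fin 5 → ℂ) : Fin 5 → ℂ := fun j => if j = 4 then -x j else x j

/-- The component of `f` odd under both `A` and `B`: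
`f^{o,o}(x) = (f(x) − f(Ax) − f(Bx) + f(ABx))/4`. -/
noncomputable def ooPart (f : (Fin 5 → ℂ) → ℂ → ℂ) (x : Fin 5 → ℂ) (u : ℂ) : ℂ :=
  (f x u - f (invA x) u - f (invB x) u + f (invA (invB x)) u) / 4

/-!
Both for `i ≠ 4` and for `i = 4` the sign involution `εᵢ` is one of `A, B` (call it `P`) and the
other one (`Q`) flips the sign of `xᵢ`, while `σᵢ` commutes with `P` and turns `Q` into `QP`.
Hence the four terms of `(f|σᵢ)^{o,o}` pair up so that only the difference
`J(xᵢ,u,0) − J(xᵢ,u,1) = −xᵢ` survives, multiplying exactly `f^{o,o}(σᵢ x)`.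
-/

open Function

/-- Four times the component of `g` that is odd under both `P` and `Q`. -/
def oddOddPart {V R : Type*} [AddCommGroup R] (P Q : V → V) (g : V → R) (x : V) : R :=
  g x - g (P x) - g (Q x) + g (Q (P x))

lemma J_zero_sub_J_one {K : Type*} [Field K] (h2 : (2 : K) ≠ 0) (t u : K) :
    J t u 0 - J t u 1 = -t := by
  simp only [J]
  field_simp
  ring

section Reflection

variable {V K : Type*} [Field K] {P Q σ : V → V} {c : V → K}

theorem oddOddPart_reflection (h2 : (2 : K) ≠ 0) (hP : Involutive P) (hPQ : Function.Commute P Q)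
    (hσP : ∀ x, σ (P x) = P (σ x)) (hσQ : ∀ x, σ (Q x) = Q (P (σ x)))
    (hcP : ∀ x, c (P x) = c x) (hcQ : ∀ x, c (Q x) = -c x) (g : V → K) (u : K) (x : V) :
    oddOddPart P Q (fun y => g (σ y) * J (c y) u 0 + g (P (σ y)) * J (c y) u 1) x =
      -c x * oddOddPart P Q g (σ x) := by
  have hPQP : P (Q (P (σ x))) = Q (σ x) := by rw [hPQ, hP]
  simp only [oddOddPart, hσP, hσQ, hP (σ x), hPQP, hPQ (σ x), hcP, hcQ]
  linear_combination (g (σ x) - g (P (σ x))) * J_zero_sub_J_one h2 (c x) u +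
    (g (Q (σ x)) - g (Q (P (σ x)))) * J_zero_sub_J_one h2 (-c x) u

end Reflection

lemma invA_involutive : Involutive invA := by
  intro x; funext j; simp only [invA]; split_ifs <;> ring

lemma invB_involutive : Involutive invB := by
  intro x; funext j; simp only [invB]; split_ifs <;> ring

lemma invA_commute_invB : Function.Commute invA invB := by
  intro x; funext j; simp only [invA, invB]; split_ifs <;> ring

lemma ooPart_eq_oddOddPart_invB_invA (f : (Fin 5 → ℂ) → ℂ → ℂ) (x : Fin 5 → ℂ) (u : ℂ) :
    ooPart f x u = oddOddPart invB invA (fun y => f y u) x / 4 := by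
  simp only [ooPart, oddOddPart]
  ring

lemma ooPart_eq_oddOddPart_invA_invB (f : (Fin 5 → ℂ) → ℂ → ℂ) (x : Fin 5 → ℂ) (u : ℂ) :
    ooPart f x u = oddOddPart invA invB (fun y => f y u) x / 4 := by
  simp only [ooPart, oddOddPart, invA_commute_invB.eq]

section OuterNode

variable {i : Fin 5} (hi : i ≠ 4) (x : Fin 5 → ℂ)
include hi

lemma epsAct_of_ne_four : epsAct i x = invB x := by
  funext j; by_cases h : j = 4 <;> simp [epsAct, invB, adj, h, hi]

lemma sigAct_invB_of_ne_four : sigAct i (invB x) = invB (sigAct i x) := by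
  funext j
  by_cases hj4 : j = 4
  · subst hj4
    simp [sigAct, invB, adj, hi, Ne.symm hi]
  · by_cases hji : j = i
    · subst hji; simp [sigAct, invB, hj4]
    · simp [sigAct, invB, adj, hi, hj4, hji]

lemma sigAct_invA_of_ne_four : sigAct i (invA x) = invA (invB (sigAct i x)) := by
  funext j
  by_cases hj4 : j = 4
  · subst hj4
    simp [sigAct, invA, invB, adj, hi, Ne.symm hi]
  · by_cases hji : j = i
    · subst hji; simp [sigAct, invA, invB, hj4, inv_neg]
    · simp [sigAct, invA, invB, adj, hi, hj4, hji]

end OuterNode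

lemma epsAct_four (x : Fin 5 → ℂ) : epsAct 4 x = invA x := by
  funext j; by_cases h : j = 4 <;> simp [epsAct, invA, adj, h]

lemma sigAct_four_invA (x : Fin 5 → ℂ) : sigAct 4 (invA x) = invA (sigAct 4 x) := by
  funext j; by_cases h : j = 4 <;> simp [sigAct, invA, adj, h]

lemma sigAct_four_invB (x : Fin 5 → ℂ) : sigAct 4 (invB x) = invB (invA (sigAct 4 x)) := by
  funext j; by_cases h : j = 4 <;> simp [sigAct, invA, invB, adj, h, inv_neg]

theorem ooPart_cg (i : Fin 5) (f : (Fin 5 → ℂ) → ℂ → ℂ) (x : Fin 5 → ℂ) (u : ℂ) :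
    ooPart (cg i f) x u = -(x i) * ooPart f (sigAct i x) u := by
  by_cases hi : i = 4
  · subst hi
    have h := oddOddPart_reflection two_ne_zero invA_involutive invA_commute_invB sigAct_four_invA
      sigAct_four_invB (c := fun y => y 4) (by simp [invA]) (by simp [invB]) (f · u) u x
    simp only [ooPart_eq_oddOddPart_invA_invB, cg, epsAct_four, h]
    ring
  · have h := oddOddPart_reflection two_ne_zero invB_involutive invA_commute_invB.symm
      (sigAct_invB_of_ne_four hi) (sigAct_invA_of_ne_four hi) (c := fun y => y i)
      (by simp [invB, hi]) (by simp [invA, hi]) (f · u) u x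
    simp only [ooPart_eq_oddOddPart_invB_invA, cg, epsAct_of_ne_four hi, h]
    ring

/-- `(f|σi)^{o,o}(x;u) = −xᵢ · f^{o,o}(σi x; u)`; in particular `f^{o,o} = 0`
implies `(f|σi)^{o,o} = 0`. -/
theorem stmt13 (i : Fin 5) (f : (Fin 5 → ℂ) → ℂ → ℂ) :
    (∀ (x : Fin 5 → ℂ) (u : ℂ), ooPart (cg i f) x u = -(x i) * ooPart f (sigAct i x) u) ∧
    ((∀ x u, ooPart f x u = 0) → ∀ x u, ooPart (cg i f) x u = 0) :=
  ⟨ooPart_cg i f, fun h x u => by rw [ooPart_cg, h, mul_zero]⟩
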